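/- Under the stated assumptions, for all sufficiently large N one has ∑_{I ∈ 𝓘^N} |I| ≤ 2√ε · N. -/

import Mathlib

open Finset Filter

open scoped Classical in
/-- The collection `𝓘^N` of maximal subintervals of `{1,…,N}` on which the gaps `g n` are at
most `1/2`, encoded as the set of pairs `(p, q)` of endpoints, `1 ≤ p ≤ q ≤ N`. -/
noncomputable def maximalIntervals (g : ℕ → ℝ) (N : ℕ) : Finset (ℕ × ℕ) :=
  (Finset.Icc 1 N ×ˢ Finset.Icc 1 N).filter fun pq =>
    pq.1 ≤ pq.2 ∧ (∀ n ∈ Finset.Icc pq.1 pq.2, g n ≤ 1 / 2) ∧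
      (pq.1 = 1 ∨ 1 / 2 < g (pq.1 - 1)) ∧ (pq.2 = N ∨ 1 / 2 < g (pq.2 + 1))

/-!
The maximal runs of small gaps are disjoint, so `∑ |I|` is at most the number `A` of `n ≤ N`
with `g n ≤ 1/2`; let `B = N - A` and `β = B / N`. Every large gap lies in `(1/2, 3/2 + ε]`, and
each gap `g n > t` yields the pair `(n, n + 1)` with difference in `(t, 3/2 + ε]`, so by PPC at
most `min (B, (3/2 + ε - t) N + o(N))` gaps exceed `t`. Integrating over `t` (layer cake,
discretised into finitely many thresholds so that PPC is invoked finitely often) bounds the sum of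
all gaps by `A/2 + B/2 + N (β (1 + ε) - β²/2) + O(εN)`. As this sum is `N - o(N)` and
`β - β²/2 = 1/2 - (A/N)²/2`, we get `(A/N)² ≤ 2βε` up to errors that the choice of
parameters keeps below `2ε`.
-/

section MaximalIntervals

variable {g : ℕ → ℝ} {N : ℕ} {a b : ℕ × ℕ}

lemma mem_maximalIntervals :
    a ∈ maximalIntervals g N ↔ 1 ≤ a.1 ∧ a.1 ≤ a.2 ∧ a.2 ≤ N ∧
      (∀ n ∈ Icc a.1 a.2, g n ≤ 1 / 2) ∧
      (a.1 = 1 ∨ 1 / 2 < g (a.1 - 1)) ∧ (a.2 = N ∨ 1 / 2 < g (a.2 + 1)) := by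
  simp only [maximalIntervals, mem_filter, mem_product, mem_Icc]
  constructor
  · rintro ⟨⟨⟨h1, -⟩, -, h2⟩, h12, rest⟩
    exact ⟨h1, h12, h2, rest⟩
  · rintro ⟨h1, h12, h2, rest⟩
    exact ⟨⟨⟨h1, by omega⟩, by omega, h2⟩, h12, rest⟩

lemma fst_le_fst_of_mem_maximalIntervals (ha : a ∈ maximalIntervals g N)
    (hb : b ∈ maximalIntervals g N) {n : ℕ} (hna : n ∈ Icc a.1 a.2) (hnb : n ∈ Icc b.1 b.2) :
    a.1 ≤ b.1 := by
  rw [mem_maximalIntervals] at ha hb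
  rw [mem_Icc] at hna hnb
  by_contra! hlt
  have hsmall : g (a.1 - 1) ≤ 1 / 2 := hb.2.2.2.1 _ (mem_Icc.2 ⟨by omega, by omega⟩)
  rcases ha.2.2.2.2.1 with h | h
  · omega
  · linarith

lemma snd_le_snd_of_mem_maximalIntervals (ha : a ∈ maximalIntervals g N)
    (hb : b ∈ maximalIntervals g N) {n : ℕ} (hna : n ∈ Icc a.1 a.2) (hnb : n ∈ Icc b.1 b.2) :
    a.2 ≤ b.2 := by
  rw [mem_maximalIntervals] at ha hb
  rw [mem_Icc] at hna hnb
  by_contra! hlt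
  have hsmall : g (b.2 + 1) ≤ 1 / 2 := ha.2.2.2.1 _ (mem_Icc.2 ⟨by omega, by omega⟩)
  rcases hb.2.2.2.2.2 with h | h
  · omega
  · linarith

lemma maximalIntervals_pairwiseDisjoint :
    (maximalIntervals g N : Set (ℕ × ℕ)).PairwiseDisjoint fun a => Icc a.1 a.2 := by
  intro a ha b hb hab
  refine Finset.disjoint_left.2 fun n hna hnb => hab (Prod.ext ?_ ?_)
  · exact (fst_le_fst_of_mem_maximalIntervals ha hb hna hnb).antisymm
      (fst_le_fst_of_mem_maximalIntervals hb ha hnb hna)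
  · exact (snd_le_snd_of_mem_maximalIntervals ha hb hna hnb).antisymm
      (snd_le_snd_of_mem_maximalIntervals hb ha hnb hna)

lemma sum_maximalIntervals_le_card :
    ∑ a ∈ maximalIntervals g N, (a.2 - a.1 + 1) ≤ #{n ∈ Icc 1 N | g n ≤ 1 / 2} := by
  calc ∑ a ∈ maximalIntervals g N, (a.2 - a.1 + 1)
      = ∑ a ∈ maximalIntervals g N, #(Icc a.1 a.2) := by
        refine sum_congr rfl fun a ha => ?_
        have := (mem_maximalIntervals.1 ha).2.1
        rw [Nat.card_Icc]
        omega
    _ = #((maximalIntervals g N).biUnion fun a => Icc a.1 a.2) :=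
        (card_biUnion maximalIntervals_pairwiseDisjoint).symm
    _ ≤ #{n ∈ Icc 1 N | g n ≤ 1 / 2} := by
        refine card_le_card fun n hn => ?_
        obtain ⟨a, ha, hn⟩ := mem_biUnion.1 hn
        obtain ⟨h1, -, h2, hsmall, -⟩ := mem_maximalIntervals.1 ha
        have := mem_Icc.1 hn
        exact mem_filter.2 ⟨mem_Icc.2 ⟨by omega, by omega⟩, hsmall n hn⟩

end MaximalIntervals

section LayerCake

lemma le_add_mul_card_filter_lt {x a η : ℝ} {K : ℕ} (hη : 0 < η) (hx : x ≤ a + K * η) :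
    x ≤ a + η * #{k ∈ range K | a + (k : ℕ) * η < x} := by
  by_cases hall : ∀ k ∈ range K, a + k * η < x
  · rw [filter_true_of_mem hall, card_range]
    linarith
  push Not at hall
  obtain ⟨k, hkK, hk⟩ := hall
  have hex : ∃ m : ℕ, x ≤ a + m * η := ⟨k, hk⟩
  have hrange : range (Nat.find hex) ⊆ {k ∈ range K | a + (k : ℕ) * η < x} := fun j hj =>
    mem_filter.2 ⟨mem_range.2 ((mem_range.1 hj).trans_le
      ((Nat.find_min' hex hk).trans_lt (mem_range.1 hkK)).le),
      not_le.1 (Nat.find_min hex (mem_range.1 hj))⟩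
  have hcard : (Nat.find hex : ℝ) ≤ #{k ∈ range K | a + (k : ℕ) * η < x} := by
    exact_mod_cast card_range (Nat.find hex) ▸ card_le_card hrange
  calc x ≤ a + Nat.find hex * η := Nat.find_spec hex
    _ ≤ a + η * #{k ∈ range K | a + (k : ℕ) * η < x} := by nlinarith

lemma sum_le_card_mul_add_mul_sum_card_filter_lt {ι : Type*} {s : Finset ι} {f : ι → ℝ}
    {a η : ℝ} {K : ℕ} (hη : 0 < η) (hf : ∀ i ∈ s, f i ≤ a + K * η) :
    ∑ i ∈ s, f i ≤ #s * a + η * ∑ k ∈ range K, (#{i ∈ s | a + k * η < f i} : ℝ) := by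
  have hswap : ∑ i ∈ s, #{k ∈ range K | a + (k : ℕ) * η < f i} =
      ∑ k ∈ range K, #{i ∈ s | a + k * η < f i} := by
    simp only [card_filter]
    exact sum_comm
  calc ∑ i ∈ s, f i ≤ ∑ i ∈ s, (a + η * #{k ∈ range K | a + (k : ℕ) * η < f i}) :=
        sum_le_sum fun i hi => le_add_mul_card_filter_lt hη (hf i hi)
    _ = #s * a + η * ∑ k ∈ range K, (#{i ∈ s | a + k * η < f i} : ℝ) := by
        rw [sum_add_distrib, sum_const, nsmul_eq_mul, ← mul_sum]
        exact_mod_cast congrArg (fun m : ℕ => (#s : ℝ) * a + η * m) hswap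

end LayerCake

section RiemannSum

lemma sq_max_add_sub_sq_max_le (s : ℝ) {η : ℝ} (hη : 0 ≤ η) :
    max (s + η) 0 ^ 2 - max s 0 ^ 2 ≤ 2 * η * max s 0 + 2 * η ^ 2 := by
  rcases le_total 0 s with hs | hs
  · rw [max_eq_left hs, max_eq_left (by linarith)]
    nlinarith
  rw [max_eq_right hs]
  rcases le_total 0 (s + η) with hsη | hsη
  · rw [max_eq_left hsη]
    nlinarith
  · rw [max_eq_right hsη]
    nlinarith

/-- `G u = β u - max (u - (C - β)) 0 ^ 2 / 2` is a primitive of `u ↦ min β (C - u)`, so each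
step of the left Riemann sum exceeds the increment of `G` by at most `η²`. -/
lemma mul_sum_min_le {β C η : ℝ} (hη : 0 ≤ η) (hβC : β ≤ C) (K : ℕ) :
    η * ∑ k ∈ range K, min β (C - k * η) ≤
      β * (K * η) - max (K * η - (C - β)) 0 ^ 2 / 2 + K * η ^ 2 := by
  set G : ℝ → ℝ := fun u => β * u - max (u - (C - β)) 0 ^ 2 / 2
  have hstep (k : ℕ) :
      η * min β (C - k * η) ≤ G ((k + 1 : ℕ) * η) - G (k * η) + η ^ 2 := by
    have hmin : min β (C - k * η) = β - max (k * η - (C - β)) 0 := by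
      rcases le_total (k * η - (C - β)) 0 with h | h
      · rw [max_eq_right h, min_eq_left (by linarith)]
        ring
      · rw [max_eq_left h, min_eq_right (by linarith)]
        ring
    have hshift : ((k + 1 : ℕ) : ℝ) * η - (C - β) = k * η - (C - β) + η := by
      push_cast
      ring
    have := sq_max_add_sub_sq_max_le (k * η - (C - β)) hη
    simp only [G, hmin, hshift]
    push_cast
    nlinarith
  have hG0 : G 0 = 0 := by simp [G, hβC]
  calc η * ∑ k ∈ range K, min β (C - k * η)
      ≤ ∑ k ∈ range K, (G ((k + 1 : ℕ) * η) - G (k * η) + η ^ 2) := by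
        rw [mul_sum]
        exact sum_le_sum fun k _ => hstep k
    _ = β * (K * η) - max (K * η - (C - β)) 0 ^ 2 / 2 + K * η ^ 2 := by
        rw [sum_add_distrib, sum_range_sub (fun k : ℕ => G (k * η)), sum_const, card_range,
          nsmul_eq_mul, Nat.cast_zero, zero_mul, hG0, sub_zero]

end RiemannSum

lemma sum_le_of_card_filter_lt_le {ι : Type*} {s : Finset ι} {f : ι → ℝ} {a C η M : ℝ}
    {K : ℕ} (hη : 0 < η) (hM : 0 < M) (hsC : #s / M ≤ C) (hf : ∀ i ∈ s, f i ≤ a + K * η)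
    (htail : ∀ k < K, (#{i ∈ s | a + (k : ℕ) * η < f i} : ℝ) ≤ (C - k * η) * M + 1) :
    ∑ i ∈ s, f i ≤ #s * a +
      M * ((#s / M) * (K * η) - max (K * η - (C - #s / M)) 0 ^ 2 / 2 + K * η ^ 2) + K * η := by
  have hcount (k : ℕ) (hk : k ∈ range K) :
      (#{i ∈ s | a + (k : ℕ) * η < f i} : ℝ) ≤ M * min (#s / M) (C - k * η) + 1 := by
    rw [mul_min_of_nonneg _ _ hM.le, mul_div_cancel₀ _ hM.ne', ← min_add_add_right]
    refine le_min ?_ (by linarith [htail k (mem_range.1 hk)])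
    have : (#{i ∈ s | a + (k : ℕ) * η < f i} : ℝ) ≤ #s := by exact_mod_cast card_filter_le _ _
    linarith
  calc ∑ i ∈ s, f i
      ≤ #s * a + η * ∑ k ∈ range K, (#{i ∈ s | a + (k : ℕ) * η < f i} : ℝ) :=
        sum_le_card_mul_add_mul_sum_card_filter_lt hη hf
    _ ≤ #s * a + η * ∑ k ∈ range K, (M * min (#s / M) (C - k * η) + 1) := by
        gcongr with k hk
        exact hcount k hk
    _ = #s * a + M * (η * ∑ k ∈ range K, min (#s / M) (C - k * η)) + K * η := by
        rw [sum_add_distrib, ← mul_sum, sum_const, card_range, nsmul_one]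
        ring
    _ ≤ _ := by
        gcongr
        exact mul_sum_min_le hη.le hsC K

section PairCorrelation

open scoped Classical in
noncomputable def pairCount (lam : ℕ → ℝ) (I : Set ℝ) (N : ℕ) : ℕ :=
  #{p ∈ Icc 1 N ×ˢ Icc 1 N | p.1 ≠ p.2 ∧ lam p.2 - lam p.1 ∈ I}

variable {lam g : ℕ → ℝ} {c : ℝ}

/-- The `+ 1` accounts for `n = N`, whose partner `N + 1` lies outside `{1, …, N}`. -/
lemma card_filter_lt_le_pairCount_add_one (hgdef : ∀ n, g n = lam (n + 1) - lam n)
    (hgap : ∀ n, 1 ≤ n → g n ≤ c) (t : ℝ) (N : ℕ) :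
    #{n ∈ Icc 1 N | t < g n} ≤ pairCount lam (Set.Ioc t c) N + 1 := by
  calc #{n ∈ Icc 1 N | t < g n} ≤ #(insert N {n ∈ Ico 1 N | t < g n}) := by
        refine card_le_card fun n hn => ?_
        obtain ⟨hn, hgn⟩ := mem_filter.1 hn
        rcases (mem_Icc.1 hn).2.eq_or_lt with rfl | hlt
        · exact mem_insert_self _ _
        · exact mem_insert_of_mem (mem_filter.2 ⟨mem_Ico.2 ⟨(mem_Icc.1 hn).1, hlt⟩, hgn⟩)
    _ ≤ #{n ∈ Ico 1 N | t < g n} + 1 := card_insert_le _ _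
    _ ≤ pairCount lam (Set.Ioc t c) N + 1 := by
        gcongr
        unfold pairCount
        refine card_le_card_of_injOn (fun n => (n, n + 1)) (fun n hn => ?_)
          (fun m _ n _ h => (Prod.ext_iff.1 h).1)
        obtain ⟨hn, hgn⟩ := mem_filter.1 hn
        obtain ⟨h1, hN⟩ := mem_Ico.1 hn
        simp only [mem_coe, mem_filter, mem_product, mem_Icc, ← hgdef]
        exact ⟨⟨⟨h1, hN.le⟩, by omega, hN⟩, by simp, hgn, hgap n h1⟩

lemma eventually_card_filter_lt_le (hgdef : ∀ n, g n = lam (n + 1) - lam n)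
    (hgap : ∀ n, 1 ≤ n → g n ≤ c) {t δ : ℝ} (hδ : 0 < δ)
    (hppc : Tendsto (fun N : ℕ => (pairCount lam (Set.Ioc t c) N : ℝ) / N) atTop
      (nhds (c - t))) :
    ∀ᶠ N : ℕ in atTop, (#{n ∈ Icc 1 N | t < g n} : ℝ) ≤ (c - t + δ) * N + 1 := by
  filter_upwards [hppc.eventually_lt_const (lt_add_of_pos_right _ hδ), eventually_gt_atTop 0]
    with N hN hN0
  have hpairs := (div_lt_iff₀ (by exact_mod_cast hN0)).1 hN
  have hcount : (#{n ∈ Icc 1 N | t < g n} : ℝ) ≤ pairCount lam (Set.Ioc t c) N + 1 := by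
    exact_mod_cast card_filter_lt_le_pairCount_add_one hgdef hgap t N
  linarith

end PairCorrelation

lemma le_two_mul_sqrt_of_le {α β ε : ℝ} (hε : 0 < ε) (hα : 0 ≤ α) (hβ : 0 ≤ β)
    (hαβ : α + β = 1)
    (h : 1 - ε / 8 ≤ 1 / 2 + β * (1 + ε) - max (β - ε / 8) 0 ^ 2 / 2 + ε / 4) :
    α ≤ 2 * √ε := by
  have hmax : β ^ 2 - β * ε / 4 ≤ max (β - ε / 8) 0 ^ 2 := by
    rcases le_total 0 (β - ε / 8) with hβε | hβε
    · rw [max_eq_left hβε]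
      nlinarith
    · rw [max_eq_right hβε]
      nlinarith
  rw [← pow_le_pow_iff_left₀ hα (by positivity) two_ne_zero, mul_pow, Real.sq_sqrt hε.le]
  nlinarith [mul_le_mul_of_nonneg_right (show β ≤ 1 by linarith) hε.le]

lemma card_filter_le_two_mul_sqrt_mul {g : ℕ → ℝ} {N K : ℕ} {ε η : ℝ} (hε : 0 < ε)
    (hη : 0 < η) (hKη : K * η = 1 + ε) (hηε : (1 + ε) * η ≤ ε / 8)
    (hN : 8 * (1 + ε) / ε ≤ N) (hgap : ∀ n ∈ Icc 1 N, g n ≤ 3 / 2 + ε)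
    (hsum : 1 - ε / 8 ≤ (∑ n ∈ Icc 1 N, g n) / N)
    (htail : ∀ k < K,
      (#{n ∈ Icc 1 N | 1 / 2 + (k : ℕ) * η < g n} : ℝ) ≤ (1 + ε + ε / 8 - k * η) * N + 1) :
    (#{n ∈ Icc 1 N | g n ≤ 1 / 2} : ℕ) ≤ 2 * √ε * N := by
  have hN' : 8 * (1 + ε) ≤ N * ε := (div_le_iff₀ hε).1 hN
  have hN0 : (0 : ℝ) < N := pos_of_mul_pos_right (by linarith) hε.le
  have hAB : (#{n ∈ Icc 1 N | g n ≤ 1 / 2} : ℝ) + #{n ∈ Icc 1 N | ¬g n ≤ 1 / 2} = N := by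
    have := card_filter_add_card_filter_not (s := Icc 1 N) (fun n => g n ≤ 1 / 2)
    rw [Nat.card_Icc, Nat.add_sub_cancel] at this
    exact_mod_cast this
  have hsmall : ∑ n ∈ Icc 1 N with g n ≤ 1 / 2, g n ≤ #{n ∈ Icc 1 N | g n ≤ 1 / 2} * (1 / 2) := by
    rw [← nsmul_eq_mul]
    exact sum_le_card_nsmul _ g _ fun n hn => (mem_filter.1 hn).2
  have hβ1 : (#{n ∈ Icc 1 N | ¬g n ≤ 1 / 2} : ℝ) / N ≤ 1 :=
    div_le_one_of_le₀ (by linarith [(Nat.cast_nonneg _ : (0 : ℝ) ≤ #{n ∈ Icc 1 N | g n ≤ 1 / 2})])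
      hN0.le
  have hlarge := sum_le_of_card_filter_lt_le (s := {n ∈ Icc 1 N | ¬g n ≤ 1 / 2}) (f := g)
    (a := 1 / 2) (C := 1 + ε + ε / 8) hη hN0 (by linarith)
    (fun n hn => by linarith [hgap n (mem_filter.1 hn).1])
    (fun k hk => le_trans (by gcongr; exact filter_subset _ _) (htail k hk))
  set A : ℝ := ((#{n ∈ Icc 1 N | g n ≤ 1 / 2} : ℕ) : ℝ)
  set B : ℝ := ((#{n ∈ Icc 1 N | ¬g n ≤ 1 / 2} : ℕ) : ℝ)
  set β := B / N
  have hβ0 : 0 ≤ β := by positivity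
  rw [hKη, show 1 + ε - (1 + ε + ε / 8 - β) = β - ε / 8 by ring,
    show (K : ℝ) * η ^ 2 = (1 + ε) * η by rw [← hKη]; ring] at hlarge
  have hkey : 1 - ε / 8 ≤ 1 / 2 + β * (1 + ε) - max (β - ε / 8) 0 ^ 2 / 2 + ε / 4 := by
    refine le_of_mul_le_mul_right ?_ hN0
    have := (le_div_iff₀ hN0).1 hsum
    rw [← sum_filter_add_sum_filter_not _ (fun n => g n ≤ 1 / 2)] at this
    linarith [mul_le_mul_of_nonneg_left hηε hN0.le]
  have hαβ : A / N + β = 1 := by rw [← add_div, hAB, div_self hN0.ne']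
  exact (div_le_iff₀ hN0).1 (le_two_mul_sqrt_of_le hε (by positivity) hβ0 hαβ hkey)

theorem eventually_sum_maximalIntervals_le {lam g : ℕ → ℝ}
    (hgdef : ∀ n, g n = lam (n + 1) - lam n)
    (havg : Tendsto (fun N : ℕ => (∑ n ∈ Icc 1 N, g n) / N) atTop (nhds 1))
    (hppc : ∀ I : Set ℝ, I.OrdConnected → Bornology.IsBounded I →
      Tendsto (fun N : ℕ => (pairCount lam I N : ℝ) / N) atTop
        (nhds (MeasureTheory.volume I).toReal))
    {ε : ℝ} (hε : 0 < ε) (hgap : ∀ n, 1 ≤ n → g n ≤ 3 / 2 + ε) :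
    ∀ᶠ N : ℕ in atTop,
      ∑ pq ∈ maximalIntervals g N, ((pq.2 - pq.1 + 1 : ℕ) : ℝ) ≤ 2 * √ε * N := by
  obtain ⟨K, hK⟩ := exists_nat_ge (8 * (1 + ε) ^ 2 / ε)
  have hK0 : (0 : ℝ) < K := (by positivity : (0 : ℝ) < 8 * (1 + ε) ^ 2 / ε).trans_le hK
  set η := (1 + ε) / K with hηdef
  have hη : 0 < η := by positivity
  have hKη : K * η = 1 + ε := mul_div_cancel₀ _ hK0.ne'
  have hηε : (1 + ε) * η ≤ ε / 8 := by
    rw [hηdef, ← mul_div_assoc, div_le_iff₀ hK0]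
    nlinarith [(div_le_iff₀ hε).1 hK]
  have htail : ∀ k ∈ range K, ∀ᶠ N : ℕ in atTop,
      (#{n ∈ Icc 1 N | 1 / 2 + (k : ℕ) * η < g n} : ℝ) ≤ (1 + ε + ε / 8 - k * η) * N + 1 := by
    intro k hk
    have hkK : 1 / 2 + k * η ≤ 3 / 2 + ε := by
      have : (k : ℝ) * η ≤ K * η := by gcongr; exact (mem_range.1 hk).le
      linarith
    have hpairs := hppc (Set.Ioc (1 / 2 + k * η) (3 / 2 + ε)) Set.ordConnected_Ioc
      (Metric.isBounded_Ioc _ _)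
    rw [Real.volume_Ioc, ENNReal.toReal_ofReal (sub_nonneg.2 hkK)] at hpairs
    filter_upwards [eventually_card_filter_lt_le hgdef hgap (by positivity : 0 < ε / 8) hpairs]
      with N hN
    convert hN using 3
    ring
  filter_upwards [(eventually_all_finset _).2 htail,
    havg.eventually_const_le (show 1 - ε / 8 < 1 by linarith),
    tendsto_natCast_atTop_atTop.eventually_ge_atTop (8 * (1 + ε) / ε)] with N htailN havgN hN
  calc ∑ pq ∈ maximalIntervals g N, ((pq.2 - pq.1 + 1 : ℕ) : ℝ)
      ≤ #{n ∈ Icc 1 N | g n ≤ 1 / 2} := by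
        exact_mod_cast sum_maximalIntervals_le_card
    _ ≤ 2 * √ε * N :=
        card_filter_le_two_mul_sqrt_mul hε hη hKη hηε hN (fun n hn => hgap n (mem_Icc.1 hn).1)
          havgN fun k hk => htailN k (mem_range.2 hk)

open scoped Classical in
theorem stmt_8_general (lam : ℕ → ℝ) (g : ℕ → ℝ) (hgdef : ∀ n, g n = lam (n + 1) - lam n)
    (havg : Tendsto (fun N : ℕ => (∑ n ∈ Finset.Icc 1 N, g n) / N) atTop (nhds 1))
    (hppc : ∀ I : Set ℝ, I.OrdConnected → Bornology.IsBounded I →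
      Tendsto (fun N : ℕ =>
          (((Finset.Icc 1 N ×ˢ Finset.Icc 1 N).filter
            (fun p => p.1 ≠ p.2 ∧ lam p.2 - lam p.1 ∈ I)).card : ℝ) / N)
        atTop (nhds (MeasureTheory.volume I).toReal))
    (ε : ℝ) (hε : ε = 1 / 10 ^ 9)
    (hgap : ∀ n, 1 ≤ n → g n ≤ 3 / 2 + ε) :
    ∀ᶠ N : ℕ in atTop,
      ∑ pq ∈ maximalIntervals g N, ((pq.2 - pq.1 + 1 : ℕ) : ℝ)
        ≤ 2 * Real.sqrt ε * N :=
  eventually_sum_maximalIntervals_le hgdef havg hppc (by rw [hε]; positivity) hgap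

open scoped Classical in
/-- Let `(λ_n)` be strictly increasing with average gap `1` and Poisson pair correlations,
let `ε = 10⁻⁹`, and suppose `g n := λ_{n+1} − λ_n ≤ 3/2 + ε` for all `n ≥ 1`. Then for all
sufficiently large `N`, `∑_{I ∈ 𝓘^N} |I| ≤ 2√ε · N`. -/
theorem stmt_8 (lam : ℕ → ℝ) (g : ℕ → ℝ) (hgdef : ∀ n, g n = lam (n + 1) - lam n)
    (hmono : ∀ n, 1 ≤ n → lam n < lam (n + 1))
    (havg : Tendsto (fun N : ℕ => (∑ n ∈ Finset.Icc 1 N, g n) / N) atTop (nhds 1))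
    (hppc : ∀ I : Set ℝ, I.OrdConnected → Bornology.IsBounded I →
      Tendsto (fun N : ℕ =>
          (((Finset.Icc 1 N ×ˢ Finset.Icc 1 N).filter
            (fun p => p.1 ≠ p.2 ∧ lam p.2 - lam p.1 ∈ I)).card : ℝ) / N)
        atTop (nhds (MeasureTheory.volume I).toReal))
    (ε : ℝ) (hε : ε = 1 / 10 ^ 9)
    (hgap : ∀ n, 1 ≤ n → g n ≤ 3 / 2 + ε) :
    ∀ᶠ N : ℕ in atTop,
      ∑ pq ∈ maximalIntervals g N, ((pq.2 - pq.1 + 1 : ℕ) : ℝ)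
        ≤ 2 * Real.sqrt ε * N :=
  stmt_8_general lam g hgdef havg hppc ε hε hgap
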